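/- Define m(ξ) = 2ξ·coth(ξ) − ξ²·csch²(ξ) − 1 for ξ ≠ 0, with coth(x) = cosh(x)/sinh(x) and csch(x) = 1/sinh(x), and write ⟨v⟩ = √(1+v²). Then there exist constants c, C > 0 such that for all ξ > 0, c·m(ξ)^{3/2}·⟨m(ξ)⟩^{1/2} ≤ | ξ²·coth(ξ) − (1 + m(ξ))·ξ | ≤ C·m(ξ)^{3/2}·⟨m(ξ)⟩^{1/2}. -/

import Mathlib

/-- Hyperbolic cotangent. -/
noncomputable def coth (x : ℝ) : ℝ := Real.cosh x / Real.sinh x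

/-- Hyperbolic cosecant. -/
noncomputable def csch (x : ℝ) : ℝ := 1 / Real.sinh x

/-- Japanese bracket `⟨v⟩ = √(1+v²)`. -/
noncomputable def jb (v : ℝ) : ℝ := Real.sqrt (1 + v ^ 2)

/-- The group-velocity symbol `m(ξ) = 2ξcoth(ξ) − ξ²csch²(ξ) − 1`. -/
noncomputable def mfun (ξ : ℝ) : ℝ := 2 * ξ * coth ξ - ξ ^ 2 * csch ξ ^ 2 - 1

private lemma mono_le {f f' : ℝ → ℝ} {a b : ℝ} (hab : a ≤ b)
    (hf : ∀ x, HasDerivAt f (f' x) x)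
    (h : ∀ x, x ∈ Set.Ioo a b → 0 ≤ f' x) : f a ≤ f b := by
  have hmono := monotoneOn_of_deriv_nonneg (convex_Icc a b)
    (fun x _ => (hf x).continuousAt.continuousWithinAt)
    (fun x hx => (hf x).differentiableAt.differentiableWithinAt)
    (fun x hx => by
      rw [(hf x).deriv]
      exact h x (by rwa [interior_Icc] at hx))
  exact hmono (Set.left_mem_Icc.2 hab) (Set.right_mem_Icc.2 hab) hab

private lemma sinh_one_gt : (11:ℝ)/10 < Real.sinh 1 := by
  rw [Real.sinh_eq]
  have h1 := Real.exp_one_gt_d9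
  have h2 := Real.exp_one_lt_d9
  have hp : (0:ℝ) < Real.exp 1 := Real.exp_pos 1
  have hm : Real.exp 1 * (Real.exp 1)⁻¹ = 1 := mul_inv_cancel₀ hp.ne'
  rw [Real.exp_neg]
  nlinarith [inv_pos.2 hp]

private lemma cosh_one_lt : Real.cosh 1 < 2 := by
  rw [Real.cosh_eq]
  have h1 := Real.exp_one_gt_d9
  have h2 := Real.exp_one_lt_d9
  have hp : (0:ℝ) < Real.exp 1 := Real.exp_pos 1
  have hm : Real.exp 1 * (Real.exp 1)⁻¹ = 1 := mul_inv_cancel₀ hp.ne'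
  rw [Real.exp_neg]
  nlinarith [inv_pos.2 hp]

private lemma cosh_one_gt : (3:ℝ)/2 < Real.cosh 1 := by
  rw [Real.cosh_eq]
  have h1 := Real.exp_one_gt_d9
  have h2 := Real.exp_one_lt_d9
  have hp : (0:ℝ) < Real.exp 1 := Real.exp_pos 1
  have hm : Real.exp 1 * (Real.exp 1)⁻¹ = 1 := mul_inv_cancel₀ hp.ne'
  rw [Real.exp_neg]
  nlinarith [inv_pos.2 hp]

private lemma cosh_le_sinh_one : Real.cosh 1 ≤ (7:ℝ)/5 * Real.sinh 1 := by
  rw [Real.cosh_eq, Real.sinh_eq]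
  have h1 := Real.exp_one_gt_d9
  have hp : (0:ℝ) < Real.exp 1 := Real.exp_pos 1
  have hm : Real.exp 1 * (Real.exp 1)⁻¹ = 1 := mul_inv_cancel₀ hp.ne'
  rw [Real.exp_neg]
  nlinarith [inv_pos.2 hp]

private lemma sinh_le_two_mul {x : ℝ} (hx : 0 ≤ x) (hx1 : x ≤ 1) : Real.sinh x ≤ 2 * x := by
  have h := mono_le (f := fun t => 2 * t - Real.sinh t) (f' := fun t => 2 * 1 - Real.cosh t) hx
    (fun t => ((hasDerivAt_id t).const_mul 2).sub (Real.hasDerivAt_sinh t))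
    (fun t ht => by
      show (0:ℝ) ≤ 2 * 1 - Real.cosh t
      have hc : Real.cosh t ≤ Real.cosh 1 := by
        rw [Real.cosh_le_cosh, abs_of_nonneg ht.1.le, abs_one]
        exact le_trans ht.2.le hx1
      nlinarith [cosh_one_lt])
  simp only [Real.sinh_zero, mul_zero] at h
  linarith [h]

private lemma cs_lower {x : ℝ} (hx : 0 ≤ x) :
    2/3 * x^3 + x ≤ Real.cosh x * Real.sinh x := by
  have h := mono_le (f := fun t => Real.cosh t * Real.sinh t - t - 2/3 * t^3)
    (f' := fun t => (Real.sinh t * Real.sinh t + Real.cosh t * Real.cosh t) - 1 - 2/3 * (3 * t^2))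
    hx
    (fun t => (((Real.hasDerivAt_cosh t).mul (Real.hasDerivAt_sinh t)).sub (hasDerivAt_id t)).sub
      ((((hasDerivAt_pow 3 t)).const_mul (2/3 : ℝ)).congr_deriv (by push_cast; ring)))
    (fun t ht => by
      show (0:ℝ) ≤ (Real.sinh t * Real.sinh t + Real.cosh t * Real.cosh t) - 1 - 2/3 * (3 * t^2)
      have hts : t ≤ Real.sinh t := Real.self_le_sinh_iff.2 ht.1.le
      nlinarith [Real.cosh_sq t, ht.1.le])
  simp only [Real.cosh_zero, Real.sinh_zero] at h
  nlinarith [h]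

private lemma cs_upper {x : ℝ} (hx : 0 ≤ x) (hx1 : x ≤ 1) :
    Real.cosh x * Real.sinh x ≤ 8/3 * x^3 + x := by
  have h := mono_le (f := fun t => 8/3 * t^3 - Real.cosh t * Real.sinh t + t)
    (f' := fun t => 8/3 * (3 * t^2) - (Real.sinh t * Real.sinh t + Real.cosh t * Real.cosh t) + 1)
    hx
    (fun t => ((((hasDerivAt_pow 3 t).const_mul (8/3 : ℝ)).congr_deriv (by push_cast; ring)).sub
      ((Real.hasDerivAt_cosh t).mul (Real.hasDerivAt_sinh t))).add (hasDerivAt_id t))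
    (fun t ht => by
      show (0:ℝ) ≤ 8/3 * (3 * t^2) - (Real.sinh t * Real.sinh t + Real.cosh t * Real.cosh t) + 1
      have h2t : Real.sinh t ≤ 2 * t := sinh_le_two_mul ht.1.le (le_trans ht.2.le hx1)
      have hsn : 0 ≤ Real.sinh t := by
        rw [Real.sinh_nonneg_iff]; exact ht.1.le
      nlinarith [Real.cosh_sq t])
  simp only [Real.cosh_zero, Real.sinh_zero] at h
  nlinarith [h]

private lemma N_lower {x : ℝ} (hx : 0 ≤ x) :
    x^4 + x^2 + Real.sinh x^2 ≤ 2 * x * (Real.cosh x * Real.sinh x) := by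
  have h := mono_le
    (f := fun t => 2 * t * (Real.cosh t * Real.sinh t) - t^2 - Real.sinh t^2 - t^4)
    (f' := fun t => (2 * 1 * (Real.cosh t * Real.sinh t)
        + 2 * t * (Real.sinh t * Real.sinh t + Real.cosh t * Real.cosh t))
        - 2 * t^1 - 2 * Real.sinh t^1 * Real.cosh t - 4 * t^3)
    hx
    (fun t => ((((hasDerivAt_id t).const_mul 2).mul
          ((Real.hasDerivAt_cosh t).mul (Real.hasDerivAt_sinh t))).sub
          (hasDerivAt_pow 2 t)).sub ((Real.hasDerivAt_sinh t).pow 2) |>.sub (hasDerivAt_pow 4 t)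
          |>.congr_deriv (by push_cast; simp only [id_eq, Pi.mul_apply]; try ring))
    (fun t ht => by
      have hts : t ≤ Real.sinh t := Real.self_le_sinh_iff.2 ht.1.le
      have key : 0 ≤ t * ((Real.sinh t - t) * (Real.sinh t + t)) :=
        mul_nonneg ht.1.le (mul_nonneg (by linarith) (by linarith [ht.1.le]))
      show (0:ℝ) ≤ (2 * 1 * (Real.cosh t * Real.sinh t)
        + 2 * t * (Real.sinh t * Real.sinh t + Real.cosh t * Real.cosh t))
        - 2 * t^1 - 2 * Real.sinh t^1 * Real.cosh t - 4 * t^3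
      nlinarith [Real.cosh_sq t, key, ht.1.le])
  simp only [Real.cosh_zero, Real.sinh_zero] at h
  nlinarith [h]

private lemma N_upper {x : ℝ} (hx : 0 ≤ x) (hx1 : x ≤ 1) :
    2 * x * (Real.cosh x * Real.sinh x) ≤ 4 * x^4 + x^2 + Real.sinh x^2 := by
  have h := mono_le
    (f := fun t => 4 * t^4 - 2 * t * (Real.cosh t * Real.sinh t) + t^2 + Real.sinh t^2)
    (f' := fun t => 4 * (4 * t^3) - (2 * 1 * (Real.cosh t * Real.sinh t)
        + 2 * t * (Real.sinh t * Real.sinh t + Real.cosh t * Real.cosh t))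
        + 2 * t^1 + 2 * Real.sinh t^1 * Real.cosh t)
    hx
    (fun t => by
      exact (((hasDerivAt_pow 4 t).const_mul (4:ℝ)).sub
          (((hasDerivAt_id t).const_mul 2).mul
          ((Real.hasDerivAt_cosh t).mul (Real.hasDerivAt_sinh t)))).add
          (hasDerivAt_pow 2 t) |>.add ((Real.hasDerivAt_sinh t).pow 2)
          |>.congr_deriv (by push_cast; simp only [id_eq, Pi.mul_apply]; try ring))
    (fun t ht => by
      have h2t : Real.sinh t ≤ 2 * t := sinh_le_two_mul ht.1.le (le_trans ht.2.le hx1)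
      have hsn : 0 ≤ Real.sinh t := by rw [Real.sinh_nonneg_iff]; exact ht.1.le
      have key : 0 ≤ t * ((2 * t - Real.sinh t) * (2 * t + Real.sinh t)) :=
        mul_nonneg ht.1.le (mul_nonneg (by linarith) (by linarith [ht.1.le]))
      show (0:ℝ) ≤ 4 * (4 * t^3) - (2 * 1 * (Real.cosh t * Real.sinh t)
        + 2 * t * (Real.sinh t * Real.sinh t + Real.cosh t * Real.cosh t))
        + 2 * t^1 + 2 * Real.sinh t^1 * Real.cosh t
      nlinarith [Real.cosh_sq t, key, ht.1.le])
  simp only [Real.cosh_zero, Real.sinh_zero] at h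
  nlinarith [h]

private lemma sinh_lin {x : ℝ} (hx : 1 ≤ x) : 11/10 * x ≤ Real.sinh x := by
  have h := mono_le (f := fun t => Real.sinh t - 11/10 * t)
    (f' := fun t => Real.cosh t - 11/10 * 1) hx
    (fun t => (Real.hasDerivAt_sinh t).sub ((hasDerivAt_id t).const_mul (11/10 : ℝ)))
    (fun t ht => by
      show (0:ℝ) ≤ Real.cosh t - 11/10 * 1
      have hc : Real.cosh 1 ≤ Real.cosh t := by
        rw [Real.cosh_le_cosh, abs_one, abs_of_nonneg (by linarith [ht.1] : (0:ℝ) ≤ t)]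
        exact ht.1.le
      nlinarith [cosh_one_gt])
  have h1 : 11/10 * 1 < Real.sinh 1 := by simpa using sinh_one_gt
  nlinarith [h, h1]

private lemma cosh_le_75 {x : ℝ} (hx : 1 ≤ x) : Real.cosh x ≤ 7/5 * Real.sinh x := by
  have h0 : 0 ≤ Real.sinh (x - 1) := by
    rw [Real.sinh_nonneg_iff]; linarith
  rw [Real.sinh_sub] at h0
  have hs1 := sinh_one_gt
  have hc1 := cosh_le_sinh_one
  have hsp : 0 ≤ Real.sinh x := by rw [Real.sinh_nonneg_iff]; linarith
  nlinarith [h0]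

private lemma rpow_sq_mul {t : ℝ} (ht : 0 ≤ t) (r : ℝ) : (t^2) ^ r = t ^ (2*r) := by
  rw [← Real.rpow_natCast t 2, ← Real.rpow_mul ht]
  norm_num

private lemma rpow_sq_three_halves {t : ℝ} (ht : 0 ≤ t) : (t^2) ^ ((3:ℝ)/2) = t^3 := by
  rw [rpow_sq_mul ht, show (2:ℝ)*((3:ℝ)/2) = ((3:ℕ):ℝ) by norm_num, Real.rpow_natCast]

private lemma rpow_sq_half {t : ℝ} (ht : 0 ≤ t) : (t^2) ^ ((1:ℝ)/2) = t := by
  rw [rpow_sq_mul ht, show (2:ℝ)*((1:ℝ)/2) = ((1:ℕ):ℝ) by norm_num, Real.rpow_natCast, pow_one]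

private lemma rpow_prod {t : ℝ} (ht : 0 ≤ t) :
    t ^ ((3:ℝ)/2) * t ^ ((1:ℝ)/2) = t^2 := by
  rcases eq_or_lt_of_le ht with h | h
  · simp [← h, Real.zero_rpow (by norm_num : ((3:ℝ)/2) ≠ 0)]
  · rw [← Real.rpow_add h, show (3:ℝ)/2 + 1/2 = ((2:ℕ):ℝ) by norm_num, Real.rpow_natCast]

private lemma jb_nonneg (v : ℝ) : 0 ≤ jb v := Real.sqrt_nonneg _

private lemma one_le_jb (v : ℝ) : 1 ≤ jb v := by
  unfold jb
  have := Real.sqrt_le_sqrt (show (1:ℝ) ≤ 1 + v^2 by nlinarith [sq_nonneg v])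
  rwa [Real.sqrt_one] at this

private lemma le_jb {v : ℝ} (hv : 0 ≤ v) : v ≤ jb v := by
  unfold jb
  have := Real.sqrt_le_sqrt (show v^2 ≤ 1 + v^2 by linarith)
  rwa [Real.sqrt_sq hv] at this

private lemma jb_le {v : ℝ} (hv : 0 ≤ v) : jb v ≤ 1 + v := by
  unfold jb
  have h : (1:ℝ) + v^2 ≤ (1+v)^2 := by nlinarith
  have := Real.sqrt_le_sqrt h
  rwa [Real.sqrt_sq (by linarith)] at this

set_option maxHeartbeats 2000000 in
theorem eikonal_profile_size :
    ∃ c C : ℝ, 0 < c ∧ 0 < C ∧ ∀ ξ : ℝ, 0 < ξ →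
      c * mfun ξ ^ ((3 : ℝ) / 2) * jb (mfun ξ) ^ ((1 : ℝ) / 2) ≤
          |ξ ^ 2 * coth ξ - (1 + mfun ξ) * ξ| ∧
        |ξ ^ 2 * coth ξ - (1 + mfun ξ) * ξ| ≤
          C * mfun ξ ^ ((3 : ℝ) / 2) * jb (mfun ξ) ^ ((1 : ℝ) / 2) := by
  refine ⟨1/144, 72, by norm_num, by norm_num, fun ξ hξ => ?_⟩
  have hs : 0 < Real.sinh ξ := by rwa [Real.sinh_pos_iff]
  have hs2 : (0:ℝ) < Real.sinh ξ ^ 2 := by positivity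
  have hξs : ξ ≤ Real.sinh ξ := Real.self_le_sinh_iff.2 hξ.le
  have hc1 : 1 ≤ Real.cosh ξ := Real.one_le_cosh ξ
  have hsc : Real.sinh ξ ≤ Real.cosh ξ := by
    nlinarith [Real.cosh_sq ξ, Real.cosh_pos ξ]
  have hA : mfun ξ = (2*ξ*(Real.cosh ξ*Real.sinh ξ) - ξ^2 - Real.sinh ξ^2)/Real.sinh ξ^2 := by
    unfold mfun coth csch
    field_simp
  have hE : ξ^2*coth ξ - (1+mfun ξ)*ξ
      = -(ξ^2*(Real.cosh ξ*Real.sinh ξ - ξ)/Real.sinh ξ^2) := by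
    unfold mfun coth csch
    field_simp
    ring
  have hcsξ : ξ ≤ Real.cosh ξ*Real.sinh ξ :=
    le_trans hξs (le_mul_of_one_le_left hs.le hc1)
  have habs : |ξ^2*coth ξ - (1+mfun ξ)*ξ|
      = ξ^2*(Real.cosh ξ*Real.sinh ξ - ξ)/Real.sinh ξ^2 := by
    rw [hE, abs_neg, abs_of_nonneg]
    exact div_nonneg (mul_nonneg (sq_nonneg ξ) (by linarith)) hs2.le
  rw [habs]
  rcases le_or_gt ξ 1 with hξ1 | hξ1
  · -- small regime
    have hNl := N_lower hξ.le
    have hNu := N_upper hξ.le hξ1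
    have h2ξ : Real.sinh ξ ≤ 2*ξ := sinh_le_two_mul hξ.le hξ1
    have hs4 : Real.sinh ξ^2 ≤ 4*ξ^2 := by nlinarith [hs.le]
    have hξ2s : ξ^2 ≤ Real.sinh ξ^2 := by nlinarith [hξ.le]
    have hA1 : ξ^2/4 ≤ mfun ξ := by
      rw [hA, le_div_iff₀ hs2]
      nlinarith [hNl, mul_le_mul_of_nonneg_left hs4 (show (0:ℝ) ≤ ξ^2/4 by positivity)]
    have hA2 : mfun ξ ≤ 4*ξ^2 := by
      rw [hA, div_le_iff₀ hs2]
      nlinarith [hNu, mul_le_mul_of_nonneg_left hξ2s (show (0:ℝ) ≤ 4*ξ^2 by positivity)]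
    have hA0 : 0 ≤ mfun ξ := le_trans (by positivity) hA1
    have hEl : ξ^3/6 ≤ ξ^2*(Real.cosh ξ*Real.sinh ξ - ξ)/Real.sinh ξ^2 := by
      rw [le_div_iff₀ hs2]
      nlinarith [cs_lower hξ.le,
        mul_le_mul_of_nonneg_left hs4 (show (0:ℝ) ≤ ξ^3/6 by positivity),
        mul_le_mul_of_nonneg_left (cs_lower hξ.le) (sq_nonneg ξ)]
    have hEu : ξ^2*(Real.cosh ξ*Real.sinh ξ - ξ)/Real.sinh ξ^2 ≤ 8/3*ξ^3 := by
      rw [div_le_iff₀ hs2]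
      nlinarith [cs_upper hξ.le hξ1,
        mul_le_mul_of_nonneg_left hξ2s (show (0:ℝ) ≤ 8/3*ξ^3 by positivity),
        mul_le_mul_of_nonneg_left (cs_upper hξ.le hξ1) (sq_nonneg ξ)]
    constructor
    · have h1 : mfun ξ ^ ((3:ℝ)/2) ≤ (2*ξ)^3 := by
        rw [← rpow_sq_three_halves (by positivity : (0:ℝ) ≤ 2*ξ)]
        exact Real.rpow_le_rpow hA0 (by nlinarith [hA2]) (by norm_num)
      have h2 : jb (mfun ξ) ^ ((1:ℝ)/2) ≤ 3 := by
        rw [show (3:ℝ) = ((3:ℝ)^2)^((1:ℝ)/2) by rw [rpow_sq_half]; norm_num]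
        refine Real.rpow_le_rpow (jb_nonneg _) ?_ (by norm_num)
        nlinarith [jb_le hA0, hA2, hξ1, hξ.le]
      have hp : mfun ξ ^ ((3:ℝ)/2) * jb (mfun ξ) ^ ((1:ℝ)/2) ≤ (2*ξ)^3 * 3 :=
        mul_le_mul h1 h2 (Real.rpow_nonneg (jb_nonneg _) _) (by positivity)
      nlinarith [hp, hEl]
    · have h3 : (ξ/2)^3 ≤ mfun ξ ^ ((3:ℝ)/2) := by
        rw [← rpow_sq_three_halves (by positivity : (0:ℝ) ≤ ξ/2)]
        exact Real.rpow_le_rpow (by positivity) (by nlinarith [hA1]) (by norm_num)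
      have h4 : (1:ℝ) ≤ jb (mfun ξ) ^ ((1:ℝ)/2) := by
        nth_rewrite 1 [← Real.one_rpow ((1:ℝ)/2)]
        exact Real.rpow_le_rpow (by norm_num) (one_le_jb _) (by norm_num)
      have hp : (ξ/2)^3 * 1 ≤ mfun ξ ^ ((3:ℝ)/2) * jb (mfun ξ) ^ ((1:ℝ)/2) :=
        mul_le_mul h3 h4 (by norm_num) (Real.rpow_nonneg hA0 _)
      nlinarith [hp, hEu, pow_nonneg hξ.le 3]
  · -- large regime
    have hξ1' : (1:ℝ) ≤ ξ := hξ1.le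
    have hsl : 11/10*ξ ≤ Real.sinh ξ := sinh_lin hξ1'
    have hcs75 : Real.cosh ξ ≤ 7/5*Real.sinh ξ := cosh_le_75 hξ1'
    have hc32 : (3:ℝ)/2 ≤ Real.cosh ξ := by
      have : Real.cosh 1 ≤ Real.cosh ξ := by
        rw [Real.cosh_le_cosh, abs_one, abs_of_nonneg hξ.le]
        exact hξ1'
      linarith [cosh_one_gt]
    have hA1 : ξ/6 ≤ mfun ξ := by
      rw [hA, le_div_iff₀ hs2]
      nlinarith [mul_le_mul_of_nonneg_left hsc (mul_nonneg (by linarith : (0:ℝ) ≤ 2*ξ) hs.le),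
        mul_le_mul hsl hsl (by positivity) hs.le, hξ1']
    have hA2 : mfun ξ ≤ 3*ξ := by
      rw [hA, div_le_iff₀ hs2]
      nlinarith [mul_le_mul_of_nonneg_left hcs75
        (mul_nonneg (by linarith : (0:ℝ) ≤ 2*ξ) hs.le), sq_nonneg ξ, hs2, hξ.le]
    have hA0 : 0 ≤ mfun ξ := le_trans (by positivity) hA1
    have hkey : Real.sinh ξ^2/3 ≤ Real.cosh ξ*Real.sinh ξ - ξ := by
      nlinarith [mul_nonneg hs.le (show (0:ℝ) ≤ 2/3*Real.cosh ξ - 1 by linarith),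
        mul_le_mul_of_nonneg_left hsc hs.le]
    have hEl : ξ^2/3 ≤ ξ^2*(Real.cosh ξ*Real.sinh ξ - ξ)/Real.sinh ξ^2 := by
      rw [le_div_iff₀ hs2]
      nlinarith [mul_le_mul_of_nonneg_left hkey (sq_nonneg ξ)]
    have hEu : ξ^2*(Real.cosh ξ*Real.sinh ξ - ξ)/Real.sinh ξ^2 ≤ 2*ξ^2 := by
      rw [div_le_iff₀ hs2]
      nlinarith [mul_le_mul_of_nonneg_left hcs75 (mul_nonneg hs.le (sq_nonneg ξ)),
        mul_nonneg (sq_nonneg ξ) hξ.le, sq_nonneg ξ]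
    constructor
    · have h1 : mfun ξ ^ ((3:ℝ)/2) ≤ (4*ξ) ^ ((3:ℝ)/2) :=
        Real.rpow_le_rpow hA0 (by linarith) (by norm_num)
      have h2 : jb (mfun ξ) ^ ((1:ℝ)/2) ≤ (4*ξ) ^ ((1:ℝ)/2) :=
        Real.rpow_le_rpow (jb_nonneg _) (by nlinarith [jb_le hA0, hA2, hξ1']) (by norm_num)
      have hp : mfun ξ ^ ((3:ℝ)/2) * jb (mfun ξ) ^ ((1:ℝ)/2)
          ≤ (4*ξ) ^ ((3:ℝ)/2) * (4*ξ) ^ ((1:ℝ)/2) :=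
        mul_le_mul h1 h2 (Real.rpow_nonneg (jb_nonneg _) _)
          (Real.rpow_nonneg (by positivity) _)
      rw [rpow_prod (by positivity : (0:ℝ) ≤ 4*ξ)] at hp
      nlinarith [hp, hEl]
    · have h3 : (ξ/6) ^ ((3:ℝ)/2) ≤ mfun ξ ^ ((3:ℝ)/2) :=
        Real.rpow_le_rpow (by positivity) hA1 (by norm_num)
      have h4 : (ξ/6) ^ ((1:ℝ)/2) ≤ jb (mfun ξ) ^ ((1:ℝ)/2) :=
        Real.rpow_le_rpow (by positivity) (le_trans hA1 (le_jb hA0)) (by norm_num)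
      have hp : (ξ/6) ^ ((3:ℝ)/2) * (ξ/6) ^ ((1:ℝ)/2)
          ≤ mfun ξ ^ ((3:ℝ)/2) * jb (mfun ξ) ^ ((1:ℝ)/2) :=
        mul_le_mul h3 h4 (Real.rpow_nonneg (by positivity) _) (Real.rpow_nonneg hA0 _)
      rw [rpow_prod (by positivity : (0:ℝ) ≤ ξ/6)] at hp
      nlinarith [hp, hEu]
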